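/- For every r > 0 and every x ∈ X, the number of points of X = {(2^c a, 2^c b, 2^c) : a, b, c ∈ ℤ} within hyperbolic distance r of x is at most C · e^{K r} for constants C, K > 0 independent of x and r; that is, the cardinality of balls in X grows at most exponentially in the radius. -/

import Mathlib

/-- `arccosh t = log (t + √(t² - 1))`. -/
noncomputable def arcosh (t : ℝ) : ℝ := Real.log (t + Real.sqrt (t ^ 2 - 1))

/-- The upper half-space `U = {p ∈ ℝ³ : p₃ > 0}`. -/
def upperHalfSpace : Set (ℝ × ℝ × ℝ) := {p | 0 < p.2.2}

/-- The hyperbolic distance in the upper half-space model of `ℍ³`. -/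
noncomputable def dH (p q : ℝ × ℝ × ℝ) : ℝ :=
  arcosh (1 + ((p.1 - q.1) ^ 2 + (p.2.1 - q.2.1) ^ 2 + (p.2.2 - q.2.2) ^ 2) /
    (2 * p.2.2 * q.2.2))

/-- The set `X = {(2^c a, 2^c b, 2^c) : a, b, c ∈ ℤ}`. -/
def Xset : Set (ℝ × ℝ × ℝ) :=
  {p | ∃ a b c : ℤ, p = ((2 : ℝ) ^ c * a, (2 : ℝ) ^ c * b, (2 : ℝ) ^ c)}

/-!
If `dH x y ≤ r`, then `cosh (dH x y) ≤ eʳ` bounds the squared Euclidean distance of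
`x = 2ᶜ (a, b, 1)` and `y = 2ᵈ (a', b', 1)` by `2 · 2ᶜ · 2ᵈ · eʳ`. The vertical part forces
`2^|d - c| ≤ 4eʳ`, hence `|d - c| < 4eʳ`, and then each horizontal part forces `a'` and `b'`
to lie within `3eʳ` of `2^(c-d) a` and `2^(c-d) b`. So the ball is the image of at most
`(8eʳ + 1)(6eʳ + 1)² ≤ 441 e³ʳ` integer triples.
-/

open Finset

lemma le_exp_arcosh {t : ℝ} (ht : 1 ≤ t) : t ≤ Real.exp (arcosh t) := by
  rw [arcosh, Real.exp_log (by positivity)]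
  exact le_add_of_nonneg_right (Real.sqrt_nonneg _)

lemma dist_sq_le_of_dH_le {p q : ℝ × ℝ × ℝ} {r : ℝ} (hp : p ∈ upperHalfSpace)
    (hq : q ∈ upperHalfSpace) (h : dH p q ≤ r) :
    (p.1 - q.1) ^ 2 + (p.2.1 - q.2.1) ^ 2 + (p.2.2 - q.2.2) ^ 2 ≤
      2 * p.2.2 * q.2.2 * Real.exp r := by
  have hpq : 0 < 2 * p.2.2 * q.2.2 := by have := hp.out; have := hq.out; positivity
  have hquot : 0 ≤ ((p.1 - q.1) ^ 2 + (p.2.1 - q.2.1) ^ 2 + (p.2.2 - q.2.2) ^ 2) /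
      (2 * p.2.2 * q.2.2) := by positivity
  have hle := (le_exp_arcosh (le_add_of_nonneg_right hquot)).trans (Real.exp_le_exp.2 h)
  rw [← div_le_iff₀' hpq]
  linarith

lemma le_four_mul_of_sq_sub_le {z w E : ℝ} (hz : 0 < z) (hw : 0 < w) (hE : 1 ≤ E)
    (h : (z - w) ^ 2 ≤ 2 * z * w * E) : w ≤ 4 * E * z := by
  refine le_of_mul_le_mul_left ?_ hw
  nlinarith [mul_le_mul_of_nonneg_left hE (by positivity : 0 ≤ 2 * z * w)]

lemma abs_sub_div_mul_le {z w E s t : ℝ} (hw : 0 < w) (hE : 0 ≤ E) (hzw : z ≤ 4 * E * w)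
    (h : (z * s - w * t) ^ 2 ≤ 2 * z * w * E) : |t - z / w * s| ≤ 3 * E := by
  refine abs_le_of_sq_le_sq ?_ (by positivity)
  have hsq : (t - z / w * s) ^ 2 = (z * s - w * t) ^ 2 / w ^ 2 := by
    field_simp; ring
  rw [hsq, div_le_iff₀ (by positivity)]
  nlinarith [mul_le_mul_of_nonneg_right hzw (by positivity : 0 ≤ 2 * w * E)]

lemma Int.cast_lt_two_zpow (k : ℤ) : (k : ℝ) < 2 ^ k := by
  rcases Int.eq_nat_or_neg k with ⟨n, rfl | rfl⟩
  · exact_mod_cast n.lt_two_pow_self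
  · have : (0 : ℝ) < 2 ^ (-(n : ℤ)) := by positivity
    push_cast; linarith [n.cast_nonneg (α := ℝ)]

lemma sub_lt_of_two_zpow_le {c d : ℤ} {M : ℝ} (h : (2 : ℝ) ^ d ≤ M * 2 ^ c) :
    ((d - c : ℤ) : ℝ) < M := by
  refine (Int.cast_lt_two_zpow _).trans_le ?_
  rw [zpow_sub₀ two_ne_zero, div_le_iff₀ (by positivity)]
  exact h

noncomputable def intsNear (m L : ℝ) : Finset ℤ := Icc ⌈m - L⌉ ⌊m + L⌋

lemma mem_intsNear {m L : ℝ} {u : ℤ} : u ∈ intsNear m L ↔ |(u : ℝ) - m| ≤ L := by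
  rw [intsNear, mem_Icc, Int.ceil_le, Int.le_floor, abs_sub_le_iff]
  constructor <;> rintro ⟨h₁, h₂⟩ <;> constructor <;> linarith

lemma card_intsNear_le {m L : ℝ} (hL : 0 ≤ L) : ((intsNear m L).card : ℝ) ≤ 2 * L + 1 := by
  have hfloor : (⌊m + L⌋ : ℝ) ≤ m + L := Int.floor_le _
  have hceil : m - L ≤ ⌈m - L⌉ := Int.le_ceil _
  rw [intsNear, Int.card_Icc, ← Int.cast_natCast, Int.toNat_of_nonneg]
  · push_cast; linarith
  · rw [sub_nonneg, Int.ceil_le]; push_cast; linarith [Int.lt_floor_add_one (m + L)]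

noncomputable def xsetPoint (p : ℤ × ℤ × ℤ) : ℝ × ℝ × ℝ :=
  ((2 : ℝ) ^ p.2.2 * p.1, (2 : ℝ) ^ p.2.2 * p.2.1, (2 : ℝ) ^ p.2.2)

lemma Xset_eq_range : Xset = Set.range xsetPoint := by
  ext p
  simp [Xset, xsetPoint, eq_comm]

lemma xsetPoint_mem_upperHalfSpace (p : ℤ × ℤ × ℤ) : xsetPoint p ∈ upperHalfSpace := by
  show (0 : ℝ) < 2 ^ p.2.2
  positivity

noncomputable def ballParams (a b c : ℤ) (E : ℝ) : Finset (ℤ × ℤ × ℤ) :=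
  (intsNear c (4 * E)).biUnion fun d =>
    intsNear (2 ^ c / 2 ^ d * a) (3 * E) ×ˢ intsNear (2 ^ c / 2 ^ d * b) (3 * E) ×ˢ {d}

lemma mem_ballParams_of_dH_le {a b c a' b' d : ℤ} {r : ℝ} (hr : 0 ≤ r)
    (h : dH (xsetPoint (a, b, c)) (xsetPoint (a', b', d)) ≤ r) :
    (a', b', d) ∈ ballParams a b c (Real.exp r) := by
  have hQ := dist_sq_le_of_dH_le (xsetPoint_mem_upperHalfSpace _)
    (xsetPoint_mem_upperHalfSpace _) h
  simp only [xsetPoint] at hQ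
  set z : ℝ := 2 ^ c
  set w : ℝ := 2 ^ d
  set E := Real.exp r
  have hz : 0 < z := by positivity
  have hw : 0 < w := by positivity
  have hE : 1 ≤ E := Real.one_le_exp hr
  have hzw : (z - w) ^ 2 ≤ 2 * z * w * E := by
    linarith [sq_nonneg (z * a - w * a'), sq_nonneg (z * b - w * b')]
  have hw_le : w ≤ 4 * E * z := le_four_mul_of_sq_sub_le hz hw hE hzw
  have hz_le : z ≤ 4 * E * w :=
    le_four_mul_of_sq_sub_le hw hz hE (by convert hzw using 1 <;> ring)
  have hd : |(d : ℝ) - c| ≤ 4 * E := by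
    rw [abs_sub_le_iff]
    constructor
    · exact_mod_cast (sub_lt_of_two_zpow_le hw_le).le
    · exact_mod_cast (sub_lt_of_two_zpow_le hz_le).le
  have ha : |(a' : ℝ) - z / w * a| ≤ 3 * E := abs_sub_div_mul_le hw (by linarith) hz_le
    (by linarith [sq_nonneg (z * b - w * b'), sq_nonneg (z - w)])
  have hb : |(b' : ℝ) - z / w * b| ≤ 3 * E := abs_sub_div_mul_le hw (by linarith) hz_le
    (by linarith [sq_nonneg (z * a - w * a'), sq_nonneg (z - w)])
  simp only [ballParams, mem_biUnion, mem_product, mem_singleton, mem_intsNear]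
  exact ⟨d, hd, ha, hb, rfl⟩

lemma card_ballParams_le (a b c : ℤ) {E : ℝ} (hE : 1 ≤ E) :
    ((ballParams a b c E).card : ℝ) ≤ 441 * E ^ 3 := by
  have hfibre : ∀ d ∈ intsNear c (4 * E), ((intsNear (2 ^ c / 2 ^ d * a) (3 * E) ×ˢ
      intsNear (2 ^ c / 2 ^ d * b) (3 * E) ×ˢ {d}).card : ℝ) ≤ 49 * E ^ 2 := by
    intro d _
    have h₁ := card_intsNear_le (m := 2 ^ c / 2 ^ d * a) (by linarith : 0 ≤ 3 * E)
    have h₂ := card_intsNear_le (m := 2 ^ c / 2 ^ d * b) (by linarith : 0 ≤ 3 * E)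
    rw [card_product, card_product, card_singleton, mul_one, Nat.cast_mul]
    nlinarith [mul_le_mul h₁ h₂ (Nat.cast_nonneg _) (by linarith)]
  have hbase := card_intsNear_le (m := c) (by linarith : 0 ≤ 4 * E)
  calc ((ballParams a b c E).card : ℝ)
      ≤ ∑ d ∈ intsNear c (4 * E), ((intsNear (2 ^ c / 2 ^ d * a) (3 * E) ×ˢ
          intsNear (2 ^ c / 2 ^ d * b) (3 * E) ×ˢ {d}).card : ℝ) := by
        exact_mod_cast card_biUnion_le
    _ ≤ (intsNear c (4 * E)).card * (49 * E ^ 2) := by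
        simpa using sum_le_card_nsmul _ _ _ hfibre
    _ ≤ 9 * E * (49 * E ^ 2) := by gcongr; linarith
    _ = 441 * E ^ 3 := by ring

/-- Balls in `X` grow at most exponentially: there are constants
`C, K > 0`, independent of the center and the radius, such that for every
`r > 0` and every `x ∈ X`, the number of points of `X` within hyperbolic
distance `r` of `x` is at most `C * exp (K * r)`. -/
theorem Xset_balls_grow_at_most_exponentially :
    ∃ C : ℝ, 0 < C ∧ ∃ K : ℝ, 0 < K ∧
      ∀ r : ℝ, 0 < r → ∀ x ∈ Xset,
        {y | y ∈ Xset ∧ dH x y ≤ r}.Finite ∧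
        ({y | y ∈ Xset ∧ dH x y ≤ r}.ncard : ℝ) ≤ C * Real.exp (K * r) := by
  refine ⟨441, by norm_num, 3, by norm_num, fun r hr x hx => ?_⟩
  rw [Xset_eq_range] at hx ⊢
  obtain ⟨⟨a, b, c⟩, rfl⟩ := hx
  have hsub : {y | y ∈ Set.range xsetPoint ∧ dH (xsetPoint (a, b, c)) y ≤ r} ⊆
      xsetPoint '' ballParams a b c (Real.exp r) := by
    rintro _ ⟨⟨⟨a', b', d⟩, rfl⟩, h⟩
    exact Set.mem_image_of_mem _ (mem_ballParams_of_dH_le hr.le h)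
  have himage_fin := (ballParams a b c (Real.exp r)).finite_toSet.image xsetPoint
  refine ⟨himage_fin.subset hsub, ?_⟩
  have hcard : {y | y ∈ Set.range xsetPoint ∧ dH (xsetPoint (a, b, c)) y ≤ r}.ncard ≤
      (ballParams a b c (Real.exp r)).card :=
    (Set.ncard_le_ncard hsub himage_fin).trans
      ((Set.ncard_image_le (finite_toSet _)).trans_eq (Set.ncard_coe_finset _))
  calc _ ≤ ((ballParams a b c (Real.exp r)).card : ℝ) := by exact_mod_cast hcard
    _ ≤ 441 * Real.exp r ^ 3 := card_ballParams_le a b c (Real.one_le_exp hr.le)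
    _ = 441 * Real.exp (3 * r) := by rw [← Real.exp_nat_mul]; norm_num
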